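/- arXiv:1610.08781 — 12 statements merged into one kernel-verified Lean document; each statement's English description precedes it below -/
import Mathlib

section
/- Let P be an additive submonoid of the nonnegative cone of an ordered field K. Then P has a minimal generating set A if and only if P is atomic with A equal to the set of atoms of P; in that case A is the unique minimal generating set. -/
/-- `a` is an atom of the additive submonoid `P`. -/
def IsAtomOf {K : Type*} [AddCommMonoid K] (P : AddSubmonoid K) (a : K) : Prop :=
  a ∈ P ∧ a ≠ 0 ∧ ∀ x ∈ P, ∀ y ∈ P, a = x + y → x = 0 ∨ y = 0

/-- `P` is atomic: every element is a finite sum of atoms. -/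
def IsAtomicMonoid {K : Type*} [AddCommMonoid K] (P : AddSubmonoid K) : Prop :=
  ∀ x ∈ P, ∃ s : Multiset K, (∀ a ∈ s, IsAtomOf P a) ∧ s.sum = x

/-- The set of factorizations of `x` into atoms of `P`. -/
def Factorizations {K : Type*} [AddCommMonoid K] (P : AddSubmonoid K) (x : K) :
    Set (Multiset K) :=
  {s | (∀ a ∈ s, IsAtomOf P a) ∧ s.sum = x}

/-- `P` is an FF-monoid. -/
def IsFFMonoid {K : Type*} [AddCommMonoid K] (P : AddSubmonoid K) : Prop :=
  IsAtomicMonoid P ∧ ∀ x ∈ P, (Factorizations P x).Finite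

/-- `P` is a BF-monoid. -/
def IsBFMonoid {K : Type*} [AddCommMonoid K] (P : AddSubmonoid K) : Prop :=
  IsAtomicMonoid P ∧ ∀ x ∈ P, {n : ℕ | ∃ s ∈ Factorizations P x, Multiset.card s = n}.Finite

/--  is a minimal generating set of the additive submonoid . -/
def IsMinimalGenSet {K : Type*} [AddCommMonoid K] (P : AddSubmonoid K) (A : Set K) : Prop :=
  AddSubmonoid.closure A = P ∧ ∀ B ⊂ A, AddSubmonoid.closure B ≠ P

/-! A minimal generating set `C` is independent: no `a ∈ C` lies in the closure of `C \ {a}`.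
Every atom lies in every generating set. Conversely, if `a ∈ C` split as `x + y` with `x, y ≠ 0`
in a positive monoid, then `x, y < a`, and an element below `a` never uses `a` in a sum of elements
of `C` (summands are bounded by the sum), so `a = x + y` would lie in the closure of `C \ {a}`. -/

section AddCommMonoid

variable {M : Type*} [AddCommMonoid M] {P : AddSubmonoid M} {C : Set M} {a : M}

theorem IsAtomOf.mem_of_closure_eq (hC : AddSubmonoid.closure C = P) (ha : IsAtomOf P a) :
    a ∈ C := by
  obtain ⟨haP, ha0, hsplit⟩ := ha
  obtain ⟨s, hs, hsum⟩ := AddSubmonoid.exists_multiset_of_mem_closure (hC ▸ haP)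
  have hCP : C ⊆ P := hC ▸ AddSubmonoid.subset_closure
  clear hC haP
  induction s using Multiset.induction with
  | empty => exact absurd hsum.symm (by simpa using ha0)
  | cons x t ih =>
    rw [Multiset.sum_cons] at hsum
    have hxC : x ∈ C := hs x (Multiset.mem_cons_self x t)
    have htC : ∀ y ∈ t, y ∈ C := fun y hy => hs y (Multiset.mem_cons_of_mem hy)
    have htP : t.sum ∈ P := AddSubmonoid.multiset_sum_mem P t fun y hy => hCP (htC y hy)
    rcases hsplit x (hCP hxC) t.sum htP hsum.symm with hx0 | ht0
    · exact ih htC (by rwa [hx0, zero_add] at hsum)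
    · rw [ht0, add_zero] at hsum
      exact hsum ▸ hxC

theorem isAtomicMonoid_iff_closure_atoms_eq :
    IsAtomicMonoid P ↔ AddSubmonoid.closure {a | IsAtomOf P a} = P := by
  refine ⟨fun hP => le_antisymm ?_ fun x hx => ?_, fun hP x hx => ?_⟩
  · exact AddSubmonoid.closure_le.2 fun b hb => hb.1
  · obtain ⟨s, hs, rfl⟩ := hP x hx
    exact AddSubmonoid.multiset_sum_mem _ s fun b hb => AddSubmonoid.subset_closure (hs b hb)
  · exact AddSubmonoid.exists_multiset_of_mem_closure (hP.ge hx)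

theorem isMinimalGenSet_atoms (hP : AddSubmonoid.closure {a | IsAtomOf P a} = P) :
    IsMinimalGenSet P {a | IsAtomOf P a} := by
  refine ⟨hP, fun B hB hBP => ?_⟩
  obtain ⟨a, ha, haB⟩ := Set.exists_of_ssubset hB
  exact haB (IsAtomOf.mem_of_closure_eq hBP ha)

theorem IsMinimalGenSet.notMem_closure_sdiff_singleton (hC : IsMinimalGenSet P C) (ha : a ∈ C) :
    a ∉ AddSubmonoid.closure (C \ {a}) := by
  intro h
  have hCle : C ⊆ AddSubmonoid.closure (C \ {a}) := fun b hb => by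
    by_cases hba : b = a
    · exact hba ▸ h
    · exact AddSubmonoid.subset_closure ⟨hb, hba⟩
  refine hC.2 _ (Set.sdiff_singleton_ssubset.2 ha) (hC.1 ▸ ?_)
  exact le_antisymm (AddSubmonoid.closure_mono Set.sdiff_subset) (AddSubmonoid.closure_le.2 hCle)

end AddCommMonoid

section Ordered

variable {M : Type*} [AddCommMonoid M] [PartialOrder M] {P : AddSubmonoid M} {C : Set M} {a : M}

theorem AddSubmonoid.mem_closure_sdiff_singleton_of_lt [IsOrderedAddMonoid M]
    (hC : ∀ x ∈ C, 0 ≤ x) {z : M} (hz : z ∈ AddSubmonoid.closure C) (hza : z < a) :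
    z ∈ AddSubmonoid.closure (C \ {a}) := by
  obtain ⟨s, hs, rfl⟩ := AddSubmonoid.exists_multiset_of_mem_closure hz
  refine AddSubmonoid.multiset_sum_mem _ s fun b hb => AddSubmonoid.subset_closure ⟨hs b hb, ?_⟩
  rintro rfl
  exact (Multiset.single_le_sum (fun x hx => hC x (hs x hx)) b hb).not_gt hza

variable [IsOrderedCancelAddMonoid M]

theorem IsMinimalGenSet.isAtomOf_of_mem (hP : ∀ x ∈ P, 0 ≤ x) (hC : IsMinimalGenSet P C)
    (ha : a ∈ C) : IsAtomOf P a := by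
  have hCP : C ⊆ P := hC.1 ▸ AddSubmonoid.subset_closure
  have hindep := hC.notMem_closure_sdiff_singleton ha
  refine ⟨hCP ha, fun ha0 => hindep (ha0 ▸ zero_mem _), fun x hx y hy hxy => ?_⟩
  by_contra! hne
  have hxa : x < a := hxy ▸ lt_add_of_pos_right x ((hP y hy).lt_of_ne' hne.2)
  have hya : y < a := hxy ▸ lt_add_of_pos_left y ((hP x hx).lt_of_ne' hne.1)
  have hCnn : ∀ c ∈ C, 0 ≤ c := fun c hc => hP c (hCP hc)
  have hxy_mem : x + y ∈ AddSubmonoid.closure (C \ {a}) :=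
    add_mem (AddSubmonoid.mem_closure_sdiff_singleton_of_lt hCnn (hC.1.ge hx) hxa)
      (AddSubmonoid.mem_closure_sdiff_singleton_of_lt hCnn (hC.1.ge hy) hya)
  exact hindep (hxy ▸ hxy_mem)

theorem IsMinimalGenSet.eq_atoms (hP : ∀ x ∈ P, 0 ≤ x) (hC : IsMinimalGenSet P C) :
    C = {a | IsAtomOf P a} :=
  Set.Subset.antisymm (fun _ ha => hC.isAtomOf_of_mem hP ha)
    fun _ ha => IsAtomOf.mem_of_closure_eq hC.1 ha

end Ordered

theorem minimal_gen_set_iff_atomic {K : Type*} [Field K] [LinearOrder K] [IsStrictOrderedRing K]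
    (P : AddSubmonoid K) (hP : ∀ x ∈ P, 0 ≤ x) (A : Set K) :
    (IsMinimalGenSet P A ↔ (IsAtomicMonoid P ∧ A = {a | IsAtomOf P a})) ∧
      (IsMinimalGenSet P A → ∀ B : Set K, IsMinimalGenSet P B → B = A) := by
  refine ⟨⟨fun hA => ?_, ?_⟩, fun hA B hB => (hB.eq_atoms hP).trans (hA.eq_atoms hP).symm⟩
  · have hatoms := hA.eq_atoms hP
    exact ⟨isAtomicMonoid_iff_closure_atoms_eq.2 (hatoms ▸ hA.1), hatoms⟩
  · rintro ⟨hatomic, rfl⟩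
    exact isMinimalGenSet_atoms (isAtomicMonoid_iff_closure_atoms_eq.1 hatomic)
end

section
/- Let P be an additive submonoid of the nonnegative reals. If 0 is not a limit point of P, then P is a BF-monoid: P is atomic and for every x ∈ P the set of lengths of factorizations of x into atoms is finite. -/
private lemma atomic_aux (P : AddSubmonoid ℝ) (hP : ∀ x ∈ P, 0 ≤ x) (ε : ℝ) (hε : 0 < ε)
    (hsep : ∀ x ∈ P, x ≠ 0 → ε ≤ x) :
    ∀ n : ℕ, ∀ x ∈ P, x ≤ n * ε → ∃ s : Multiset ℝ, (∀ a ∈ s, IsAtomOf P a) ∧ s.sum = x := by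
  intro n
  induction n with
  | zero =>
    intro x hx hle
    have : x = 0 := le_antisymm (by simpa using hle) (hP x hx)
    exact ⟨0, by simp, by simp [this]⟩
  | succ n ih =>
    intro x hx hle
    by_cases hx0 : x = 0
    · exact ⟨0, by simp, by simp [hx0]⟩
    by_cases hatom : IsAtomOf P x
    · exact ⟨{x}, by simpa using hatom, by simp⟩
    · have : ∃ y ∈ P, ∃ z ∈ P, x = y + z ∧ ¬(y = 0 ∨ z = 0) := by
        by_contra h
        push_neg at h
        exact hatom ⟨hx, hx0, h⟩
      obtain ⟨y, hy, z, hz, hxyz, hne⟩ := this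
      push_neg at hne
      obtain ⟨hy0, hz0⟩ := hne
      have hyε := hsep y hy hy0
      have hzε := hsep z hz hz0
      have hyle : y ≤ n * ε := by
        have : y + ε ≤ y + z := by linarith
        push_cast at hle ⊢
        linarith [hxyz ▸ hle]
      have hzle : z ≤ n * ε := by
        push_cast at hle ⊢
        linarith [hxyz ▸ hle]
      obtain ⟨s1, hs1, hs1sum⟩ := ih y hy hyle
      obtain ⟨s2, hs2, hs2sum⟩ := ih z hz hzle
      refine ⟨s1 + s2, ?_, by simp [hs1sum, hs2sum, hxyz]⟩
      intro a ha
      rcases Multiset.mem_add.mp ha with h | h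
      · exact hs1 a h
      · exact hs2 a h

theorem bf_of_zero_not_limit_point (P : AddSubmonoid ℝ) (hP : ∀ x ∈ P, 0 ≤ x)
    (h0 : ∃ ε : ℝ, 0 < ε ∧ ∀ x ∈ P, x ≠ 0 → ε ≤ x) :
    IsBFMonoid P := by
  obtain ⟨ε, hε, hsep⟩ := h0
  constructor
  · intro x hx
    refine atomic_aux P hP ε hε hsep ⌈x / ε⌉₊ x hx ?_
    calc x = (x / ε) * ε := by field_simp
    _ ≤ ⌈x / ε⌉₊ * ε := by
        have := Nat.le_ceil (x / ε)
        exact mul_le_mul_of_nonneg_right this hε.le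
  · intro x hx
    apply Set.Finite.subset (Set.finite_Iic ⌊x / ε⌋₊)
    rintro n ⟨s, ⟨hsa, hssum⟩, rfl⟩
    have hcard : (Multiset.card s : ℝ) * ε ≤ s.sum := by
      have : ∀ a ∈ s, ε ≤ a := fun a ha => hsep a (hsa a ha).1 (hsa a ha).2.1
      calc (Multiset.card s : ℝ) * ε = (Multiset.replicate (Multiset.card s) ε).sum := by
            simp [Multiset.sum_replicate, mul_comm]
      _ ≤ s.sum := by
            apply Multiset.sum_le_sum_of_rel_le
            rw [Multiset.rel_replicate_left]
            exact ⟨rfl, this⟩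
    simp only [Set.mem_Iic]
    rw [Nat.le_floor_iff (div_nonneg (hP x hx) hε.le)]
    rw [le_div_iff₀ hε]
    linarith [hssum ▸ hcard]
end

section
/- Let P be an additive submonoid of the nonnegative reals, and suppose 0 is not a limit point of P. Then every element x of P can be written as a sum of at most ⌊x/ε⌋ atoms of P, where ε > 0 is any lower bound for the nonzero elements of P. -/
theorem sum_of_atoms_card_le_floor (P : AddSubmonoid ℝ) (hP : ∀ x ∈ P, 0 ≤ x)
    (ε : ℝ) (hε : 0 < ε) (hlb : ∀ y ∈ P, y ≠ 0 → ε ≤ y) :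
    ∀ x ∈ P, ∃ s : Multiset ℝ, (∀ a ∈ s, IsAtomOf P a) ∧ s.sum = x ∧
      Multiset.card s ≤ ⌊x / ε⌋₊ := by
  suffices h : ∀ n, ∀ x ∈ P, ⌊x / ε⌋₊ = n →
      ∃ s : Multiset ℝ, (∀ a ∈ s, IsAtomOf P a) ∧ s.sum = x ∧
        Multiset.card s ≤ ⌊x / ε⌋₊ by
    intro x hx; exact h _ x hx rfl
  intro n
  induction n using Nat.strong_induction_on with
  | _ n ih =>
  intro x hx hn
  subst hn
  by_cases hx0 : x = 0
  · exact ⟨0, by simp, by simp [hx0]⟩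
  · have hεx : ε ≤ x := hlb x hx hx0
    have hone : 1 ≤ ⌊x / ε⌋₊ := by
      rw [Nat.one_le_iff_ne_zero, ← Nat.pos_iff_ne_zero, Nat.floor_pos]
      exact (one_le_div hε).mpr hεx
    by_cases hatom : IsAtomOf P x
    · exact ⟨{x}, by simpa using hatom, by simpa using hone⟩
    · simp only [IsAtomOf, not_and, not_forall] at hatom
      have h2 := hatom hx hx0
      push_neg at h2
      obtain ⟨y, hy, z, hz, hxyz, hy0, hz0⟩ := h2
      have hεy : ε ≤ y := hlb y hy hy0
      have hεz : ε ≤ z := hlb z hz hz0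
      have hsup : ⌊y / ε⌋₊ + ⌊z / ε⌋₊ ≤ ⌊x / ε⌋₊ := by
        rw [hxyz, add_div]
        apply Nat.le_floor
        push_cast
        exact add_le_add (Nat.floor_le (div_nonneg (hε.le.trans hεy) hε.le))
          (Nat.floor_le (div_nonneg (hε.le.trans hεz) hε.le))
      have hylt : ⌊y / ε⌋₊ < ⌊x / ε⌋₊ := by
        have : 1 ≤ ⌊z / ε⌋₊ := by
          rw [Nat.one_le_iff_ne_zero, ← Nat.pos_iff_ne_zero, Nat.floor_pos]
          exact (one_le_div hε).mpr hεz
        omega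
      have hzlt : ⌊z / ε⌋₊ < ⌊x / ε⌋₊ := by
        have : 1 ≤ ⌊y / ε⌋₊ := by
          rw [Nat.one_le_iff_ne_zero, ← Nat.pos_iff_ne_zero, Nat.floor_pos]
          exact (one_le_div hε).mpr hεy
        omega
      obtain ⟨s1, hs1a, hs1s, hs1c⟩ := ih _ hylt y hy rfl
      obtain ⟨s2, hs2a, hs2s, hs2c⟩ := ih _ hzlt z hz rfl
      refine ⟨s1 + s2, ?_, ?_, ?_⟩
      · intro a ha
        rcases Multiset.mem_add.mp ha with h | h
        exacts [hs1a a h, hs2a a h]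
      · rw [Multiset.sum_add, hs1s, hs2s, hxyz]
      · rw [Multiset.card_add]; omega
end

section
/- Let P be an additive submonoid of the nonnegative cone of an ordered field K generated by an increasing sequence (a_n). Then P is atomic and the set of atoms of P equals { a_n : a_n ∉ ⟨a_1, …, a_{n-1}⟩ }. -/
/-! Since every generator is nonnegative, a decomposition `a n = y + z` into nonzero elements has
`y, z < a n`, so both summands are sums of generators `a j ≤ y < a n`, i.e. with `j < n`.
Hence `a n` is an atom as soon as it is not generated by its predecessors, and otherwise it is a
sum of them, which by strong induction are sums of atoms. Conversely an atom of a monoid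
`closure s` must lie in `s`; applied to `closure (a '' Set.Iio n)`, this shows that an atom
`a n` with `n` minimal is not generated by its predecessors. -/

open AddSubmonoid

theorem IsAtomOf.of_le {M : Type*} [AddCommMonoid M] {P Q : AddSubmonoid M} {x : M}
    (hQP : Q ≤ P) (hx : x ∈ Q) (h : IsAtomOf P x) : IsAtomOf Q x :=
  ⟨hx, h.2.1, fun y hy z hz => h.2.2 y (hQP hy) z (hQP hz)⟩

theorem IsAtomOf.mem_of_closure {M : Type*} [AddCommMonoid M] {s : Set M} {x : M}
    (h : IsAtomOf (closure s) x) : x ∈ s := by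
  induction h.1 using AddSubmonoid.closure_induction with
  | mem x hx => exact hx
  | zero => exact absurd rfl h.2.1
  | add y z hy hz ihy ihz =>
    rcases h.2.2 y hy z hz rfl with rfl | rfl
    · rw [zero_add] at h ⊢; exact ihz h
    · rw [add_zero] at h ⊢; exact ihy h

theorem isAtomicMonoid_of_le_closure {M : Type*} [AddCommMonoid M] {P : AddSubmonoid M}
    (h : P ≤ closure {x | IsAtomOf P x}) : IsAtomicMonoid P :=
  fun _ hx => exists_multiset_of_mem_closure (h hx)

section Ordered

variable {M : Type*} [AddCommMonoid M] [PartialOrder M] [IsOrderedAddMonoid M]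
  {s : Set M} {x : M}

theorem nonneg_of_mem_closure (hs : ∀ y ∈ s, 0 ≤ y) (hx : x ∈ closure s) : 0 ≤ x := by
  induction hx using AddSubmonoid.closure_induction with
  | mem y hy => exact hs y hy
  | zero => exact le_rfl
  | add y z _ _ hy hz => exact add_nonneg hy hz

theorem mem_closure_setOf_le (hs : ∀ y ∈ s, 0 ≤ y) (hx : x ∈ closure s) :
    x ∈ closure {y ∈ s | y ≤ x} := by
  induction hx using AddSubmonoid.closure_induction with
  | mem y hy => exact subset_closure ⟨hy, le_rfl⟩
  | zero => exact zero_mem _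
  | add y z hyc hzc hy hz =>
    have hmono {u v : M} (huv : u ≤ v) :
        closure {w ∈ s | w ≤ u} ≤ closure {w ∈ s | w ≤ v} :=
      closure_mono fun w ⟨hw, hwu⟩ => ⟨hw, hwu.trans huv⟩
    exact add_mem (hmono (le_add_of_nonneg_right (nonneg_of_mem_closure hs hzc)) hy)
      (hmono (le_add_of_nonneg_left (nonneg_of_mem_closure hs hyc)) hz)

end Ordered

section Sequence

variable {M : Type*} [AddCommMonoid M] {a : ℕ → M}

open Classical in
theorem IsAtomOf.exists_eq_notMem_closure_image_Iio {x : M}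
    (h : IsAtomOf (closure (Set.range a)) x) :
    ∃ n, x = a n ∧ a n ∉ closure (a '' Set.Iio n) := by
  have hex : ∃ n, a n = x := h.mem_of_closure
  refine ⟨Nat.find hex, (Nat.find_spec hex).symm, fun hmem => ?_⟩
  have hatom : IsAtomOf (closure (a '' Set.Iio (Nat.find hex))) (a (Nat.find hex)) :=
    (Nat.find_spec hex ▸ h).of_le (closure_mono (Set.image_subset_range _ _)) hmem
  obtain ⟨k, hk, hak⟩ := hatom.mem_of_closure
  exact Nat.find_min hex hk (hak.trans (Nat.find_spec hex))

theorem mem_closure_image_Iio_of_lt [PartialOrder M] [IsOrderedAddMonoid M] (ha : Monotone a)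
    (h0 : ∀ n, 0 ≤ a n) {x : M} {n : ℕ} (hx : x ∈ closure (Set.range a))
    (hlt : x < a n) : x ∈ closure (a '' Set.Iio n) := by
  refine closure_mono ?_ (mem_closure_setOf_le (Set.forall_mem_range.2 h0) hx)
  rintro _ ⟨⟨j, rfl⟩, hj⟩
  exact ⟨j, lt_of_not_ge fun hnj => (hj.trans_lt hlt).not_ge (ha hnj), rfl⟩

variable [PartialOrder M] [IsOrderedCancelAddMonoid M]

theorem isAtomOf_closure_range (ha : Monotone a) (h0 : ∀ n, 0 ≤ a n) {n : ℕ}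
    (hn : a n ∉ closure (a '' Set.Iio n)) : IsAtomOf (closure (Set.range a)) (a n) := by
  refine ⟨subset_closure ⟨n, rfl⟩, fun h => hn (h ▸ zero_mem _), fun y hy z hz hyz => ?_⟩
  by_contra! hne
  have hpos {w : M} (hw : w ∈ closure (Set.range a)) (hw0 : w ≠ 0) : 0 < w :=
    (nonneg_of_mem_closure (Set.forall_mem_range.2 h0) hw).lt_of_ne' hw0
  have hy_lt : y < a n := hyz ▸ lt_add_of_pos_right y (hpos hz hne.2)
  have hz_lt : z < a n := hyz ▸ lt_add_of_pos_left z (hpos hy hne.1)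
  exact hn (hyz ▸ add_mem (mem_closure_image_Iio_of_lt ha h0 hy hy_lt)
    (mem_closure_image_Iio_of_lt ha h0 hz hz_lt))

theorem isAtomicMonoid_closure_range (ha : Monotone a) (h0 : ∀ n, 0 ≤ a n) :
    IsAtomicMonoid (closure (Set.range a)) := by
  refine isAtomicMonoid_of_le_closure (closure_le.2 (Set.range_subset_iff.2 fun n => ?_))
  induction n using Nat.strong_induction_on with
  | _ n ih =>
    by_cases hn : a n ∈ closure (a '' Set.Iio n)
    · exact closure_le.2 (Set.image_subset_iff.2 ih) hn
    · exact subset_closure (isAtomOf_closure_range ha h0 hn)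

end Sequence

theorem increasing_positive_monoid_atomic {K : Type*} [Field K] [LinearOrder K] [IsStrictOrderedRing K]
    (a : ℕ → K) (ha : Monotone a) (hpos : ∀ n, 0 < a n)
    (P : AddSubmonoid K) (hgen : AddSubmonoid.closure (Set.range a) = P) :
    IsAtomicMonoid P ∧
      {x | IsAtomOf P x} =
        {x | ∃ n, x = a n ∧ a n ∉ AddSubmonoid.closure (a '' Set.Iio n)} := by
  subst hgen
  have h0 (n : ℕ) : 0 ≤ a n := (hpos n).le
  refine ⟨isAtomicMonoid_closure_range ha h0,
    Set.ext fun x => ⟨IsAtomOf.exists_eq_notMem_closure_image_Iio, ?_⟩⟩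
  rintro ⟨n, rfl, hn⟩
  exact isAtomOf_closure_range ha h0 hn
end

section
/- An additive submonoid of the nonnegative cone of an ordered field is finitely generated if and only if it can be generated both by an increasing sequence and by a decreasing sequence. -/
/-!
A finite generating set, listed in increasing (or decreasing) order and then repeated forever at
its last element, is both kinds of generating sequence. Conversely, the closure of an increasing
sequence of nonnegative elements is partially well-ordered (Higman's lemma), so any decreasing
sequence inside it is eventually constant; a decreasing generating sequence therefore takes only
finitely many values.
-/

theorem Finset.exists_monotone_nat_range_eq {α : Type*} [LinearOrder α] (s : Finset α)
    (hs : s.Nonempty) : ∃ f : ℕ → α, Monotone f ∧ Set.range f = s := by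
  obtain ⟨m, hm⟩ := Nat.exists_eq_add_one_of_ne_zero hs.card_pos.ne'
  let e := s.orderEmbOfFin hm
  have hclamp : Function.Surjective fun n => Fin.clamp n m := fun i =>
    ⟨i, Fin.ext (min_eq_left (Nat.le_of_lt_succ i.isLt))⟩
  refine ⟨fun n => e (Fin.clamp n m), e.monotone.comp Fin.clamp_monotone, ?_⟩
  rw [Set.range_comp' e, hclamp.range_eq, Set.image_univ, s.range_orderEmbOfFin hm]

theorem Finset.exists_antitone_nat_range_eq {α : Type*} [LinearOrder α] (s : Finset α)
    (hs : s.Nonempty) : ∃ g : ℕ → α, Antitone g ∧ Set.range g = s := by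
  obtain ⟨g, hg, hgs⟩ :=
    (s.map OrderDual.toDual.toEmbedding).exists_monotone_nat_range_eq hs.map
  refine ⟨OrderDual.ofDual ∘ g, hg.dual_right, ?_⟩
  rw [Set.range_comp, hgs]
  ext; simp

theorem AddSubmonoid.isPWO_closure_range_of_monotone {α : Type*} [AddCommMonoid α]
    [PartialOrder α] [IsOrderedCancelAddMonoid α] {f : ℕ → α} (hf : Monotone f)
    (hf0 : ∀ n, 0 ≤ f n) : (closure (Set.range f) : Set α).IsPWO := by
  refine Set.IsPWO.addSubmonoid_closure (by rintro _ ⟨n, rfl⟩; exact hf0 n) ?_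
  simpa using (Set.isPWO_of_wellQuasiOrderedLE (Set.univ : Set ℕ)).image_of_monotone hf

theorem Antitone.finite_range_of_isPWO {α : Type*} [PartialOrder α] {g : ℕ → α}
    (hg : Antitone g) (hpwo : (Set.range g).IsPWO) : (Set.range g).Finite := by
  obtain ⟨φ, hφ⟩ := hpwo.exists_monotone_subseq (f := g) fun n => ⟨n, rfl⟩
  have hconst : ∀ k, g (φ k) = g (φ 0) := fun k =>
    le_antisymm (hg (φ.monotone k.zero_le)) (hφ k.zero_le)
  have hstable : ∀ n, φ 0 ≤ n → g n = g (φ 0) := fun n hn =>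
    le_antisymm (hg hn) (hconst n ▸ hg (φ.strictMono.id_le n))
  refine ((Set.finite_Iic (φ 0)).image g).subset ?_
  rintro _ ⟨n, rfl⟩
  rcases le_total n (φ 0) with h | h
  · exact ⟨n, h, rfl⟩
  · exact ⟨φ 0, Set.mem_Iic.2 le_rfl, (hstable n h).symm⟩

theorem fg_iff_increasing_and_decreasing {K : Type*} [Field K] [LinearOrder K] [IsStrictOrderedRing K]
    (P : AddSubmonoid K) (hP : ∀ x ∈ P, 0 ≤ x) :
    P.FG ↔
      ((∃ f : ℕ → K, Monotone f ∧ (∀ n, 0 ≤ f n) ∧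
          AddSubmonoid.closure (Set.range f) = P) ∧
        (∃ g : ℕ → K, Antitone g ∧ (∀ n, 0 ≤ g n) ∧
          AddSubmonoid.closure (Set.range g) = P)) := by
  constructor
  · rintro ⟨S, rfl⟩
    -- adjoining `0` keeps the closure and makes the generating set nonempty
    have hclosure : AddSubmonoid.closure ↑(insert 0 S) = AddSubmonoid.closure (S : Set K) := by
      rw [Finset.coe_insert, AddSubmonoid.closure_insert_zero]
    have hnonneg : ∀ x ∈ ((insert 0 S : Finset K) : Set K), 0 ≤ x := fun x hx =>
      hP x (hclosure ▸ AddSubmonoid.subset_closure hx)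
    obtain ⟨f, hf, hfS⟩ := (insert 0 S).exists_monotone_nat_range_eq (Finset.insert_nonempty 0 S)
    obtain ⟨g, hg, hgS⟩ := (insert 0 S).exists_antitone_nat_range_eq (Finset.insert_nonempty 0 S)
    exact ⟨⟨f, hf, fun n => hnonneg _ (hfS ▸ Set.mem_range_self n), hfS ▸ hclosure⟩,
      ⟨g, hg, fun n => hnonneg _ (hgS ▸ Set.mem_range_self n), hgS ▸ hclosure⟩⟩
  · rintro ⟨⟨f, hf, hf0, rfl⟩, ⟨g, hg, -, hgP⟩⟩
    have hpwo : (Set.range g).IsPWO :=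
      (AddSubmonoid.isPWO_closure_range_of_monotone hf hf0).mono
        (hgP ▸ AddSubmonoid.subset_closure)
    exact (AddSubmonoid.fg_iff _).2 ⟨_, hgP, hg.finite_range_of_isPWO hpwo⟩
end

section
/- Let K be an ordered field and P a nontrivial finitely generated additive submonoid of K≥0. Then P can be generated by an unbounded increasing sequence if and only if K is Archimedean. -/
/-!
Every element of `P = closure S` lies below some multiple `n • c` of a fixed `c` bounding the
generators, so an unbounded sequence in `P` makes `ℕ` cofinal in `K`. Conversely, in the
Archimedean case, the generators listed in increasing order followed by `c, 2 • c, 3 • c, …`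
with `c = ∑ S` (positive, in `P` and above every generator) form an unbounded nondecreasing
generating sequence.
-/

open Finset in
theorem exists_monotone_range_eq_union {α : Type*} [LinearOrder α] (S : Finset α) {v : ℕ → α}
    (hv : Monotone v) (hSv : ∀ s ∈ S, s ≤ v 0) :
    ∃ u : ℕ → α, Monotone u ∧ Set.range u = ↑S ∪ Set.range v := by
  set e := S.orderEmbOfFin rfl
  refine ⟨fun n => if h : n < #S then e ⟨n, h⟩ else v (n - #S), ?_, ?_⟩
  · refine monotone_nat_of_le_succ fun n => ?_
    by_cases hn1 : n + 1 < #S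
    · simp only [hn1, Nat.lt_of_succ_lt hn1, dite_true]
      exact e.monotone (Fin.mk_le_mk.mpr n.le_succ)
    by_cases hn : n < #S
    · simp only [hn, hn1, dite_true, dite_false]
      exact (hSv _ (S.orderEmbOfFin_mem rfl _)).trans (hv (Nat.zero_le _))
    · simp only [hn, hn1, dite_false]
      exact hv (by omega)
  · ext x
    constructor
    · rintro ⟨n, rfl⟩
      dsimp only
      split_ifs
      · exact Or.inl (S.orderEmbOfFin_mem rfl _)
      · exact Or.inr ⟨_, rfl⟩
    · rintro (hx | ⟨m, rfl⟩)
      · rw [← S.range_orderEmbOfFin rfl] at hx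
        obtain ⟨i, rfl⟩ := hx
        exact ⟨i, dif_pos i.2⟩
      · exact ⟨m + #S, by simp⟩

namespace AddSubmonoid

theorem exists_le_nsmul_of_mem_closure {M : Type*} [AddCommMonoid M] [PartialOrder M]
    [IsOrderedAddMonoid M] {s : Set M} {c : M} (hc : ∀ x ∈ s, x ≤ c) {p : M}
    (hp : p ∈ closure s) : ∃ n : ℕ, p ≤ n • c := by
  induction hp using closure_induction with
  | mem x hx => exact ⟨1, by simpa using hc x hx⟩
  | zero => exact ⟨0, by simp⟩
  | add x y _ _ hx hy =>
    obtain ⟨m, hm⟩ := hx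
    obtain ⟨n, hn⟩ := hy
    exact ⟨m + n, add_nsmul c m n ▸ add_le_add hm hn⟩

theorem FG.exists_nat_gt_of_forall_exists_gt {K : Type*} [Ring K] [LinearOrder K]
    [IsStrictOrderedRing K] {P : AddSubmonoid K} (hfg : P.FG) (hunb : ∀ x, ∃ p ∈ P, x < p)
    (x : K) : ∃ n : ℕ, x < n := by
  obtain ⟨S, rfl⟩ := hfg
  set c := 1 + ∑ s ∈ S, |s|
  have hc : 0 < c := by positivity
  have hSc : ∀ s ∈ (S : Set K), s ≤ c := fun s hs =>
    calc s ≤ |s| := le_abs_self s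
      _ ≤ ∑ t ∈ S, |t| := Finset.single_le_sum (fun t _ => abs_nonneg t) hs
      _ ≤ c := le_add_of_nonneg_left zero_le_one
  obtain ⟨p, hp, hxp⟩ := hunb (x * c)
  obtain ⟨n, hpn⟩ := exists_le_nsmul_of_mem_closure hSc hp
  rw [nsmul_eq_mul] at hpn
  exact ⟨n, lt_of_mul_lt_mul_right (hxp.trans_le hpn) hc.le⟩

theorem FG.exists_monotone_unbounded_closure_eq {K : Type*} [Field K] [LinearOrder K]
    [IsStrictOrderedRing K] (harch : ∀ x : K, ∃ n : ℕ, x < n) {P : AddSubmonoid K}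
    (hfg : P.FG) (hP : ∀ x ∈ P, 0 ≤ x) (hnt : P ≠ ⊥) :
    ∃ u : ℕ → K, Monotone u ∧ (∀ n, 0 ≤ u n) ∧
      closure (Set.range u) = P ∧ ∀ x : K, ∃ n : ℕ, x < u n := by
  obtain ⟨S, rfl⟩ := hfg
  have hSP : (S : Set K) ⊆ closure (S : Set K) := subset_closure
  set c := ∑ s ∈ S, s
  have hcP : c ∈ closure (S : Set K) := sum_mem _ fun s hs => hSP hs
  have hSc : ∀ s ∈ S, s ≤ c := fun s hs => Finset.single_le_sum (fun t ht => hP t (hSP ht)) hs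
  have hc : 0 < c := by
    obtain ⟨p, hp, hp0⟩ := (closure (S : Set K)).bot_or_exists_ne_zero.resolve_left hnt
    obtain ⟨n, hpn⟩ := exists_le_nsmul_of_mem_closure hSc hp
    refine (hP c hcP).lt_of_ne fun hc0 => hp0 (le_antisymm ?_ (hP p hp))
    simpa [← hc0] using hpn
  obtain ⟨u, hu, hrange⟩ := exists_monotone_range_eq_union S (v := fun n => (n + 1) • c)
    (fun m n hmn => nsmul_le_nsmul_left hc.le (by omega)) (by simpa using hSc)
  have hclosure : closure (Set.range u) = closure (S : Set K) := by
    rw [hrange, closure_union, sup_eq_left, closure_le]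
    rintro _ ⟨n, rfl⟩
    exact AddSubmonoid.nsmul_mem _ hcP _
  refine ⟨u, hu, fun n => hP _ (hclosure ▸ subset_closure ⟨n, rfl⟩), hclosure,
    fun x => ?_⟩
  obtain ⟨n, hn⟩ := harch (x / c)
  obtain ⟨m, hm⟩ : (n + 1) • c ∈ Set.range u := hrange ▸ Or.inr ⟨n, rfl⟩
  refine ⟨m, hm ▸ ?_⟩
  rw [div_lt_iff₀ hc] at hn
  rw [nsmul_eq_mul]
  push_cast
  linarith

end AddSubmonoid

theorem fg_strongly_increasing_iff_archimedean {K : Type*} [Field K] [LinearOrder K] [IsStrictOrderedRing K]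
    (P : AddSubmonoid K) (hP : ∀ x ∈ P, 0 ≤ x) (hnt : P ≠ ⊥) (hfg : P.FG) :
    (∃ u : ℕ → K, Monotone u ∧ (∀ n, 0 ≤ u n) ∧
        AddSubmonoid.closure (Set.range u) = P ∧ ∀ x : K, ∃ n : ℕ, x < u n) ↔
      (∀ x : K, ∃ n : ℕ, x < (n : K)) := by
  refine ⟨fun ⟨u, _, _, hclosure, hunb⟩ => hfg.exists_nat_gt_of_forall_exists_gt fun x => ?_,
    fun harch => hfg.exists_monotone_unbounded_closure_eq harch hP hnt⟩
  obtain ⟨n, hn⟩ := hunb x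
  exact ⟨u n, hclosure ▸ AddSubmonoid.subset_closure ⟨n, rfl⟩, hn⟩
end

section
/- Every additive submonoid of the nonnegative reals generated by an increasing sequence is an FF-monoid: it is atomic and every element has only finitely many factorizations into atoms. -/
/-! The least nonzero generator `ε` bounds every nonzero element of `P` from below, so splitting
non-atoms terminates (atomicity) and a factorization of `x` has at most `x / ε` atoms. Atoms of `P`
are generators, and the range of a monotone sequence is partially well-ordered; in an ordered
cancellative monoid only finitely many multisets of a given size drawn from a PWO set have a
given sum. -/

open Set

section PWO

variable {α : Type*} [AddCommMonoid α] [PartialOrder α] [IsOrderedCancelAddMonoid α] {A : Set α}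

theorem Set.IsPWO.image_sum_card_eq (hA : A.IsPWO) (k : ℕ) :
    (Multiset.sum '' {s : Multiset α | (∀ a ∈ s, a ∈ A) ∧ Multiset.card s = k}).IsPWO := by
  induction k with
  | zero =>
    refine (finite_singleton (0 : α)).isPWO.mono ?_
    rintro _ ⟨s, ⟨-, hs⟩, rfl⟩
    simp [Multiset.card_eq_zero.mp hs]
  | succ k ih =>
    refine (hA.add ih).mono ?_
    rintro _ ⟨_, ⟨hsA, hs⟩, rfl⟩
    obtain ⟨a, t, rfl, ht⟩ := Multiset.card_eq_succ_iff.mp hs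
    rw [Multiset.sum_cons]
    exact add_mem_add (hsA a (Multiset.mem_cons_self a t))
      ⟨t, ⟨fun b hb => hsA b (Multiset.mem_cons_of_mem hb), ht⟩, rfl⟩

/-- Induct on `k`, splitting off one element `a` of the multiset: `a` and the sum of the rest form a
pair in the antidiagonal over `x` of `A` and the PWO set of `k`-fold sums, which is finite. -/
theorem Set.IsPWO.finite_card_eq_sum_eq (hA : A.IsPWO) (k : ℕ) (x : α) :
    {s : Multiset α | (∀ a ∈ s, a ∈ A) ∧ Multiset.card s = k ∧ s.sum = x}.Finite := by
  induction k generalizing x with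
  | zero =>
    refine (finite_singleton (0 : Multiset α)).subset ?_
    rintro s ⟨-, hs, -⟩
    exact Multiset.card_eq_zero.mp hs
  | succ k ih =>
    have hanti := AddAntidiagonal.finite_of_isPWO hA (hA.image_sum_card_eq k) x
    refine (hanti.biUnion fun p _ => (ih p.2).image (p.1 ::ₘ ·)).subset ?_
    rintro _ ⟨hsA, hs, rfl⟩
    obtain ⟨a, t, rfl, ht⟩ := Multiset.card_eq_succ_iff.mp hs
    have htA : ∀ b ∈ t, b ∈ A := fun b hb => hsA b (Multiset.mem_cons_of_mem hb)
    refine mem_biUnion (x := (a, t.sum)) ⟨hsA a (Multiset.mem_cons_self a t),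
      ⟨t, ⟨htA, ht⟩, rfl⟩, (Multiset.sum_cons a t).symm⟩ ⟨t, ⟨htA, ht, rfl⟩, rfl⟩

end PWO

theorem Monotone.exists_pos_forall_eq_zero_or_le {M : Type*} [PartialOrder M] [Zero M]
    [NoMaxOrder M] {f : ℕ → M} (hf : Monotone f) (hnn : ∀ n, 0 ≤ f n) :
    ∃ ε > 0, ∀ n, f n = 0 ∨ ε ≤ f n := by
  classical
  by_cases h : ∃ n, f n ≠ 0
  · refine ⟨f (Nat.find h), (hnn _).lt_of_ne' (Nat.find_spec h), fun n => ?_⟩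
    rcases lt_or_ge n (Nat.find h) with hn | hn
    · exact .inl (not_not.mp (Nat.find_min h hn))
    · exact .inr (hf hn)
  · push Not at h
    obtain ⟨ε, hε⟩ := exists_gt (0 : M)
    exact ⟨ε, hε, fun n => .inl (h n)⟩

theorem AddSubmonoid.mem_of_isAtomOf_closure {K : Type*} [AddCommMonoid K] {S : Set K} {a : K}
    (ha : IsAtomOf (closure S) a) : a ∈ S := by
  induction ha.1 using AddSubmonoid.closure_induction with
  | mem x hx => exact hx
  | zero => exact absurd rfl ha.2.1
  | add x y hx hy ihx ihy =>
    rcases ha.2.2 x hx y hy rfl with rfl | rfl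
    · rw [zero_add] at ha ⊢
      exact ihy ha
    · rw [add_zero] at ha ⊢
      exact ihx ha

section BoundedAwayFromZero

variable {M : Type*} [AddCommMonoid M] [PartialOrder M] [IsOrderedCancelAddMonoid M] {ε : M}

theorem AddSubmonoid.forall_mem_closure_eq_zero_or_le {S : Set M} (hε : 0 ≤ ε)
    (hS : ∀ x ∈ S, x = 0 ∨ ε ≤ x) : ∀ x ∈ closure S, x = 0 ∨ ε ≤ x := by
  intro x hx
  induction hx using AddSubmonoid.closure_induction with
  | mem x hx => exact hS x hx
  | zero => exact .inl rfl
  | add x y _ _ hx hy =>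
    rcases hx with rfl | hx
    · simpa using hy
    · have hy0 : 0 ≤ y := hy.elim (fun h => h.ge) hε.trans
      exact .inr (le_add_of_le_of_nonneg hx hy0)

variable {P : AddSubmonoid M}

theorem card_nsmul_le_of_mem_factorizations (hP : ∀ x ∈ P, x = 0 ∨ ε ≤ x) {x : M}
    {s : Multiset M} (hs : s ∈ Factorizations P x) : Multiset.card s • ε ≤ x :=
  hs.2 ▸ Multiset.card_nsmul_le_sum fun a ha =>
    (hP a (hs.1 a ha).1).resolve_left (hs.1 a ha).2.1

/-- A non-atom `x ≤ (n + 1) • ε` splits into two summands that are `≥ ε`, hence both `≤ n • ε`. -/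
theorem nonempty_factorizations_of_le_nsmul (hε : 0 < ε) (hP : ∀ x ∈ P, x = 0 ∨ ε ≤ x)
    (n : ℕ) : ∀ x ∈ P, x ≤ n • ε → (Factorizations P x).Nonempty := by
  induction n with
  | zero =>
    intro x hx hxn
    rcases hP x hx with rfl | hεx
    · exact ⟨0, by simp, Multiset.sum_zero⟩
    · exact absurd (hεx.trans hxn) (by simpa using hε.not_ge)
  | succ n ih =>
    intro x hx hxn
    by_cases hxa : IsAtomOf P x
    · exact ⟨{x}, by simpa using hxa, Multiset.sum_singleton x⟩
    rcases eq_or_ne x 0 with rfl | hx0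
    · exact ⟨0, by simp, Multiset.sum_zero⟩
    obtain ⟨y, hy, z, hz, rfl, hy0, hz0⟩ : ∃ y ∈ P, ∃ z ∈ P, x = y + z ∧ y ≠ 0 ∧ z ≠ 0 := by
      simpa [IsAtomOf, hx, hx0] using hxa
    have hyε := (hP y hy).resolve_left hy0
    have hzε := (hP z hz).resolve_left hz0
    rw [succ_nsmul] at hxn
    obtain ⟨sy, hsy, rfl⟩ :=
      ih y hy (le_of_add_le_add_right ((add_le_add le_rfl hzε).trans hxn))
    obtain ⟨sz, hsz, rfl⟩ :=
      ih z hz (le_of_add_le_add_left ((add_le_add hyε le_rfl).trans (add_comm (n • ε) ε ▸ hxn)))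
    refine ⟨sy + sz, fun a ha => ?_, Multiset.sum_add sy sz⟩
    exact (Multiset.mem_add.mp ha).elim (hsy a) (hsz a)

theorem isFFMonoid_of_isPWO_atoms [Archimedean M] (hε : 0 < ε) (hP : ∀ x ∈ P, x = 0 ∨ ε ≤ x)
    (hA : {a | IsAtomOf P a}.IsPWO) : IsFFMonoid P := by
  refine ⟨fun x hx => ?_, fun x hx => ?_⟩ <;> obtain ⟨N, hN⟩ := Archimedean.arch x hε
  · exact nonempty_factorizations_of_le_nsmul hε hP N x hx hN
  refine ((finite_Iic N).biUnion fun k _ => hA.finite_card_eq_sum_eq k x).subset ?_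
  intro s hs
  have hcard : Multiset.card s ≤ N := (nsmul_left_strictMono hε).le_iff_le.mp
    ((card_nsmul_le_of_mem_factorizations hP hs).trans hN)
  exact mem_biUnion (x := Multiset.card s) hcard ⟨hs.1, rfl, hs.2⟩

end BoundedAwayFromZero

theorem increasing_real_positive_monoid_is_FF (f : ℕ → ℝ) (hf : Monotone f)
    (hnn : ∀ n, 0 ≤ f n) (P : AddSubmonoid ℝ)
    (hgen : AddSubmonoid.closure (Set.range f) = P) :
    IsFFMonoid P := by
  subst hgen
  obtain ⟨ε, hε, hfε⟩ := hf.exists_pos_forall_eq_zero_or_le hnn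
  have hP := AddSubmonoid.forall_mem_closure_eq_zero_or_le hε.le (forall_mem_range.mpr hfε)
  have hrange : (range f).IsPWO :=
    image_univ (f := f) ▸ (IsPWO.of_linearOrder univ).image_of_monotone hf
  exact isFFMonoid_of_isPWO_atoms hε hP
    (hrange.mono fun a ha => AddSubmonoid.mem_of_isAtomOf_closure ha)
end

section
/- Let (p_n) be an increasing enumeration of the prime numbers and let P be the Puiseux monoid generated by {1/p_n : n ∈ ℕ}. Then P is atomic with set of atoms exactly {1/p_n : n ∈ ℕ}, but P is not a BF-monoid: the element 1 admits factorizations of unbounded length. -/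
/-!
A sum of reciprocals of primes has denominator dividing the product of those primes, so if it
equals `1 / q` then `1 / q` is one of the summands. Since all generators are positive, this makes
every generator `1 / p_n` an atom, and `1 = p_n • (1 / p_n)` is a factorization of length `p_n`,
which is unbounded.
-/

section Atoms

variable {K : Type*} [AddCommMonoid K]

lemma IsAtomOf.mem_of_mem_closure {S : Set K} (hS : (0 : K) ∉ S) {a : K}
    (ha : IsAtomOf (AddSubmonoid.closure S) a) : a ∈ S := by
  obtain ⟨haP, ha0, hsplit⟩ := ha
  obtain ⟨l, hlS, rfl⟩ := AddSubmonoid.exists_multiset_of_mem_closure haP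
  obtain ⟨b, t, rfl⟩ : ∃ b t, l = b ::ₘ t := by
    rcases l.empty_or_exists_mem with rfl | ⟨b, hb⟩
    · exact absurd Multiset.sum_zero ha0
    · exact ⟨b, Multiset.exists_cons_of_mem hb⟩
  have hbS := hlS b (Multiset.mem_cons_self b t)
  have htP : t.sum ∈ AddSubmonoid.closure S := AddSubmonoid.multiset_sum_mem _ _
    fun y hy => AddSubmonoid.subset_closure (hlS y (Multiset.mem_cons_of_mem hy))
  rcases hsplit b (AddSubmonoid.subset_closure hbS) t.sum htP (Multiset.sum_cons b t) with h | h
  · exact absurd (h ▸ hbS) hS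
  · rwa [Multiset.sum_cons, h, add_zero]

lemma isAtomOf_closure_of_forall_sum_eq [PartialOrder K] [IsOrderedCancelAddMonoid K]
    {S : Set K} (hS : ∀ a ∈ S, 0 < a) {b : K} (hb : b ∈ S)
    (hmem : ∀ l : Multiset K, (∀ a ∈ l, a ∈ S) → l.sum = b → b ∈ l) :
    IsAtomOf (AddSubmonoid.closure S) b := by
  refine ⟨AddSubmonoid.subset_closure hb, (hS b hb).ne', ?_⟩
  have hnonneg : ∀ l : Multiset K, (∀ a ∈ l, a ∈ S) → 0 ≤ l.sum := fun l hl =>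
    Multiset.sum_nonneg fun a ha => (hS a (hl a ha)).le
  have hother_zero : ∀ l₁ l₂ : Multiset K, (∀ a ∈ l₁, a ∈ S) → (∀ a ∈ l₂, a ∈ S) →
      b = l₁.sum + l₂.sum → b ∈ l₁ → l₂.sum = 0 := by
    intro l₁ l₂ hl₁ hl₂ hsum hbl₁
    obtain ⟨t, rfl⟩ := Multiset.exists_cons_of_mem hbl₁
    have ht : ∀ a ∈ t, a ∈ S := fun a ha => hl₁ a (Multiset.mem_cons_of_mem ha)
    rw [Multiset.sum_cons, add_assoc, left_eq_add] at hsum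
    exact ((add_eq_zero_iff_of_nonneg (hnonneg t ht) (hnonneg l₂ hl₂)).mp hsum).2
  intro x hx y hy hxy
  obtain ⟨l₁, hl₁, rfl⟩ := AddSubmonoid.exists_multiset_of_mem_closure hx
  obtain ⟨l₂, hl₂, rfl⟩ := AddSubmonoid.exists_multiset_of_mem_closure hy
  have hl : ∀ a ∈ l₁ + l₂, a ∈ S := fun a ha => (Multiset.mem_add.mp ha).elim (hl₁ a) (hl₂ a)
  rcases Multiset.mem_add.mp (hmem _ hl (by rw [Multiset.sum_add, hxy])) with h | h
  · exact Or.inr (hother_zero l₁ l₂ hl₁ hl₂ hxy h)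
  · exact Or.inl (hother_zero l₂ l₁ hl₂ hl₁ (by rwa [add_comm]) h)

lemma isAtomicMonoid_closure {S : Set K} (hS : ∀ a ∈ S, IsAtomOf (AddSubmonoid.closure S) a) :
    IsAtomicMonoid (AddSubmonoid.closure S) := fun _ hx =>
  (AddSubmonoid.exists_multiset_of_mem_closure hx).imp fun _ hl =>
    ⟨fun a ha => hS a (hl.1 a ha), hl.2⟩

lemma replicate_mem_factorizations {P : AddSubmonoid K} {a : K} (ha : IsAtomOf P a) (k : ℕ) :
    Multiset.replicate k a ∈ Factorizations P (k • a) :=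
  ⟨fun _ hb => Multiset.eq_of_mem_replicate hb ▸ ha, Multiset.sum_replicate k a⟩

lemma not_isBFMonoid_of_forall_exists_le_card {P : AddSubmonoid K} {x : K}
    (hlong : ∀ N : ℕ, ∃ s ∈ Factorizations P x, N ≤ Multiset.card s) : ¬IsBFMonoid P := by
  rintro ⟨-, hfin⟩
  obtain ⟨s₀, hs₀, -⟩ := hlong 0
  have hxP : x ∈ P := hs₀.2 ▸ P.multiset_sum_mem s₀ fun a ha => (hs₀.1 a ha).1
  obtain ⟨B, hB⟩ := (hfin x hxP).bddAbove
  obtain ⟨s, hs, hBs⟩ := hlong (B + 1)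
  have : Multiset.card s ≤ B := hB ⟨s, hs, rfl⟩
  omega

end Atoms

lemma Multiset.den_sum_dvd_prod_den (l : Multiset ℚ) : l.sum.den ∣ (l.map Rat.den).prod := by
  induction l using Multiset.induction with
  | empty => simp
  | cons x l ih =>
    rw [Multiset.sum_cons, Multiset.map_cons, Multiset.prod_cons]
    exact (Rat.add_den_dvd x l.sum).trans (mul_dvd_mul_left _ ih)

lemma one_div_prime_mem_of_sum_eq {l : Multiset ℚ}
    (hl : ∀ x ∈ l, ∃ r : ℕ, r.Prime ∧ x = 1 / r) {q : ℕ} (hq : q.Prime)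
    (hsum : l.sum = 1 / q) : (1 / q : ℚ) ∈ l := by
  have hdvd : q ∣ (l.map Rat.den).prod := by
    simpa only [hsum, one_div, Rat.inv_natCast_den_of_pos hq.pos] using l.den_sum_dvd_prod_den
  obtain ⟨d, hd, hqd⟩ := hq.prime.exists_mem_multiset_dvd hdvd
  obtain ⟨x, hx, rfl⟩ := Multiset.mem_map.mp hd
  obtain ⟨r, hr, rfl⟩ := hl x hx
  rw [one_div, Rat.inv_natCast_den_of_pos hr.pos, Nat.prime_dvd_prime_iff_eq hq hr] at hqd
  rwa [hqd]

theorem reciprocals_of_primes_not_BF_general (p : ℕ → ℕ) (hmono : StrictMono p)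
    (hp : ∀ n, (p n).Prime)
    (P : AddSubmonoid ℚ)
    (hgen : AddSubmonoid.closure {x : ℚ | ∃ n : ℕ, x = 1 / (p n : ℚ)} = P) :
    IsAtomicMonoid P ∧
      {a | IsAtomOf P a} = {x : ℚ | ∃ n : ℕ, x = 1 / (p n : ℚ)} ∧
      ¬IsBFMonoid P ∧
      ∀ N : ℕ, ∃ s ∈ Factorizations P 1, N ≤ Multiset.card s := by
  subst hgen
  set S := {x : ℚ | ∃ n : ℕ, x = 1 / (p n : ℚ)}
  have hpos : ∀ n, (0 : ℚ) < p n := fun n => Nat.cast_pos.mpr (hp n).pos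
  have hSpos : ∀ a ∈ S, 0 < a := by
    rintro _ ⟨n, rfl⟩
    exact one_div_pos.mpr (hpos n)
  have hatom : ∀ a ∈ S, IsAtomOf (AddSubmonoid.closure S) a := by
    rintro _ ⟨m, rfl⟩
    refine isAtomOf_closure_of_forall_sum_eq hSpos ⟨m, rfl⟩ fun l hl hsum =>
      one_div_prime_mem_of_sum_eq (fun x hx => ?_) (hp m) hsum
    obtain ⟨n, rfl⟩ := hl x hx
    exact ⟨p n, hp n, rfl⟩
  have hatoms : {a | IsAtomOf (AddSubmonoid.closure S) a} = S :=
    Set.Subset.antisymm (fun _ ha => ha.mem_of_mem_closure fun h0 => (hSpos 0 h0).false) hatom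
  have hlong : ∀ N : ℕ, ∃ s ∈ Factorizations (AddSubmonoid.closure S) 1,
      N ≤ Multiset.card s := fun N => by
    have hone : p N • (1 / (p N : ℚ)) = 1 := by
      rw [nsmul_eq_mul, mul_one_div_cancel (hpos N).ne']
    exact ⟨_, hone ▸ replicate_mem_factorizations (hatom _ ⟨N, rfl⟩) (p N),
      (Multiset.card_replicate _ _).symm ▸ hmono.le_apply⟩
  exact ⟨isAtomicMonoid_closure hatom, hatoms, not_isBFMonoid_of_forall_exists_le_card hlong,
    hlong⟩

theorem reciprocals_of_primes_not_BF (p : ℕ → ℕ) (hmono : StrictMono p)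
    (hp : ∀ n, (p n).Prime) (hall : ∀ q : ℕ, q.Prime → ∃ n, p n = q)
    (P : AddSubmonoid ℚ)
    (hgen : AddSubmonoid.closure {x : ℚ | ∃ n : ℕ, x = 1 / (p n : ℚ)} = P) :
    IsAtomicMonoid P ∧
      {a | IsAtomOf P a} = {x : ℚ | ∃ n : ℕ, x = 1 / (p n : ℚ)} ∧
      ¬IsBFMonoid P ∧
      ∀ N : ℕ, ∃ s ∈ Factorizations P 1, N ≤ Multiset.card s :=
  reciprocals_of_primes_not_BF_general p hmono hp P hgen
end

section
/- A finitely generated additive submonoid of the nonnegative cone of an ordered field contains no strictly decreasing sequence. -/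
theorem AddSubmonoid.FG.isPWO_of_nonneg {M : Type*} [AddCommMonoid M] [PartialOrder M]
    [IsOrderedCancelAddMonoid M] {P : AddSubmonoid M} (hfg : P.FG) (hP : ∀ x ∈ P, 0 ≤ x) :
    (P : Set M).IsPWO := by
  obtain ⟨S, rfl⟩ := hfg
  exact S.finite_toSet.isPWO.addSubmonoid_closure fun x hx ↦ hP x (AddSubmonoid.subset_closure hx)

theorem fg_positive_monoid_no_strict_anti {K : Type*} [Field K] [LinearOrder K] [IsStrictOrderedRing K]
    (P : AddSubmonoid K) (hP : ∀ x ∈ P, 0 ≤ x) (hfg : P.FG) :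
    ¬∃ s : ℕ → K, (∀ n, s n ∈ P) ∧ StrictAnti s := by
  rintro ⟨s, hs, hanti⟩
  exact Set.isWF_iff_no_descending_seq.1 (hfg.isPWO_of_nonneg hP).isWF s hanti hs
end

section
/- Every additive submonoid of the nonnegative cone of an ordered field that is a BF-monoid is hereditarily atomic: every submonoid of it is atomic. -/
/-!
In a BF-monoid `P` the lengths of the factorizations of `x` are bounded. If `x = y + z` with
`y, z` nonzero, appending a (necessarily nonempty) factorization of `z` to any factorization of
`y` gives one of `x`, so the bound for `y` is strictly smaller than the bound for `x`. Hence, in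
any submonoid `Q ≤ P`, repeatedly splitting non-atoms of `Q` terminates in atoms of `Q`.
-/

section Factorizations

variable {M : Type*} [AddCommMonoid M] {P Q : AddSubmonoid M}

theorem zero_mem_factorizations : (0 : Multiset M) ∈ Factorizations P 0 :=
  ⟨by simp, Multiset.sum_zero⟩

theorem singleton_mem_factorizations {a : M} (ha : IsAtomOf P a) :
    {a} ∈ Factorizations P a :=
  ⟨by simpa using ha, Multiset.sum_singleton a⟩

theorem add_mem_factorizations {s t : Multiset M} {x y : M} (hs : s ∈ Factorizations P x)
    (ht : t ∈ Factorizations P y) : s + t ∈ Factorizations P (x + y) := by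
  refine ⟨fun a ha => ?_, by rw [Multiset.sum_add, hs.2, ht.2]⟩
  rcases Multiset.mem_add.mp ha with ha | ha
  exacts [hs.1 a ha, ht.1 a ha]

theorem card_pos_of_mem_factorizations {s : Multiset M} {x : M} (hs : s ∈ Factorizations P x)
    (hx : x ≠ 0) : 0 < Multiset.card s := by
  rw [Multiset.card_pos]
  rintro rfl
  exact hx (by simpa using hs.2.symm)

theorem exists_add_of_not_isAtomOf {x : M} (hx : x ∈ Q) (hx0 : x ≠ 0) (hatom : ¬IsAtomOf Q x) :
    ∃ y ∈ Q, ∃ z ∈ Q, y ≠ 0 ∧ z ≠ 0 ∧ x = y + z := by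
  simp only [IsAtomOf, hx, hx0, not_false_eq_true, ne_eq, true_and, not_forall, not_or] at hatom
  obtain ⟨y, hy, z, hz, hxyz, hy0, hz0⟩ := hatom
  exact ⟨y, hy, z, hz, hy0, hz0, hxyz⟩

theorem card_le_of_mem_factorizations_add (hP : IsAtomicMonoid P) {y z : M} (hz : z ∈ P)
    (hz0 : z ≠ 0) {n : ℕ} (hbound : ∀ s ∈ Factorizations P (y + z), Multiset.card s ≤ n + 1) :
    ∀ s ∈ Factorizations P y, Multiset.card s ≤ n := by
  intro s hs
  obtain ⟨t, ht⟩ := hP z hz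
  have hst := hbound (s + t) (add_mem_factorizations hs ht)
  have ht_pos := card_pos_of_mem_factorizations ht hz0
  rw [Multiset.card_add] at hst
  omega

theorem factorizations_nonempty_of_card_le (hP : IsAtomicMonoid P) (hQP : Q ≤ P) (n : ℕ) :
    ∀ x ∈ Q, (∀ s ∈ Factorizations P x, Multiset.card s ≤ n) →
      (Factorizations Q x).Nonempty := by
  induction n with
  | zero =>
    intro x hx hbound
    obtain ⟨s, hs⟩ := hP x (hQP hx)
    have hx0 : x = 0 := by
      by_contra hx0
      exact (card_pos_of_mem_factorizations hs hx0).ne' (Nat.le_zero.mp (hbound s hs))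
    exact hx0 ▸ ⟨0, zero_mem_factorizations⟩
  | succ n ih =>
    intro x hx hbound
    by_cases hx0 : x = 0
    · exact hx0 ▸ ⟨0, zero_mem_factorizations⟩
    by_cases hatom : IsAtomOf Q x
    · exact ⟨{x}, singleton_mem_factorizations hatom⟩
    obtain ⟨y, hy, z, hz, hy0, hz0, rfl⟩ := exists_add_of_not_isAtomOf hx hx0 hatom
    obtain ⟨sy, hsy⟩ := ih y hy (card_le_of_mem_factorizations_add hP (hQP hz) hz0 hbound)
    obtain ⟨sz, hsz⟩ := ih z hz <| card_le_of_mem_factorizations_add hP (hQP hy) hy0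
      (by rwa [add_comm])
    exact ⟨sy + sz, add_mem_factorizations hsy hsz⟩

theorem IsBFMonoid.isAtomicMonoid_of_le (hBF : IsBFMonoid P) (hQP : Q ≤ P) :
    IsAtomicMonoid Q := by
  intro x hx
  obtain ⟨n, hn⟩ := (hBF.2 x (hQP hx)).bddAbove
  exact factorizations_nonempty_of_card_le hBF.1 hQP n x hx fun s hs => hn ⟨s, hs, rfl⟩

end Factorizations

theorem bf_positive_monoid_hereditarily_atomic_general {K : Type*} [Field K]
    (P : AddSubmonoid K) (hBF : IsBFMonoid P) :
    ∀ Q : AddSubmonoid K, Q ≤ P → IsAtomicMonoid Q :=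
  fun _ hQP => hBF.isAtomicMonoid_of_le hQP

theorem bf_positive_monoid_hereditarily_atomic {K : Type*} [Field K] [LinearOrder K] [IsStrictOrderedRing K]
    (P : AddSubmonoid K) (hP : ∀ x ∈ P, 0 ≤ x) (hBF : IsBFMonoid P) :
    ∀ Q : AddSubmonoid K, Q ≤ P → IsAtomicMonoid Q :=
  bf_positive_monoid_hereditarily_atomic_general P hBF
end

section
/- Let K be a non-Archimedean ordered field with prime subfield Q. Then 0 is not a limit point of the additive monoid Q≥0 ⊆ K (in the order topology of K), yet Q≥0 is antimatter: it has no atoms. -/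
theorem exists_pos_lt_ratCast_of_not_archimedean {K : Type*} [Field K] [LinearOrder K]
    [IsStrictOrderedRing K] (h : ¬∀ x : K, ∃ n : ℕ, x < n) :
    ∃ δ : K, 0 < δ ∧ ∀ q : ℚ, 0 < q → δ < q := by
  push Not at h
  obtain ⟨x, hx⟩ := h
  -- An element above every natural number is infinite, so its inverse is infinitesimal.
  have hx_pos : 0 < x := one_pos.trans_le (by exact_mod_cast hx 1)
  refine ⟨x⁻¹, inv_pos.mpr hx_pos, fun q hq => inv_lt_of_inv_lt₀ (by exact_mod_cast hq) ?_⟩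
  obtain ⟨n, hn⟩ := exists_nat_gt q⁻¹
  calc (q : K)⁻¹ = ((q⁻¹ : ℚ) : K) := (Rat.cast_inv q).symm
    _ < n := by exact_mod_cast hn
    _ ≤ x := hx n

theorem not_isAtomOf_of_forall_half_mem {K : Type*} [DivisionRing K] [CharZero K]
    (P : AddSubmonoid K) (hP : ∀ x ∈ P, x / 2 ∈ P) (a : K) : ¬IsAtomOf P a := by
  rintro ⟨ha, ha0, hatom⟩
  have hhalf0 : a / 2 ≠ 0 := div_ne_zero ha0 two_ne_zero
  rcases hatom (a / 2) (hP a ha) (a / 2) (hP a ha) (add_halves a).symm with h | h <;>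
    exact hhalf0 h

theorem prime_subfield_cone_antimatter {K : Type*} [Field K] [LinearOrder K] [IsStrictOrderedRing K]
    (hnA : ¬∀ x : K, ∃ n : ℕ, x < (n : K))
    (Q : AddSubmonoid K)
    (hQ : (Q : Set K) = {x : K | ∃ q : ℚ, 0 ≤ q ∧ (q : K) = x}) :
    (∃ δ : K, 0 < δ ∧ ∀ x ∈ Q, x ≠ 0 → δ ≤ x) ∧ ∀ a : K, ¬IsAtomOf Q a := by
  have mem_Q (x : K) : x ∈ Q ↔ ∃ q : ℚ, 0 ≤ q ∧ (q : K) = x := Set.ext_iff.mp hQ x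
  constructor
  · obtain ⟨δ, hδ, hδq⟩ := exists_pos_lt_ratCast_of_not_archimedean hnA
    refine ⟨δ, hδ, fun x hx hx0 => ?_⟩
    obtain ⟨q, hq, rfl⟩ := (mem_Q x).mp hx
    exact (hδq q (hq.lt_of_ne (by rintro rfl; simp at hx0))).le
  · refine not_isAtomOf_of_forall_half_mem Q fun x hx => ?_
    obtain ⟨q, hq, rfl⟩ := (mem_Q x).mp hx
    exact (mem_Q _).mpr ⟨q / 2, by positivity, by push_cast; rfl⟩
end

section
/- Let (p_n) be an enumeration of the primes and let P be the Puiseux monoid generated by A = { (p_n + ⌊p_n/2⌋)/p_n, (2p_n − ⌊p_n/2⌋)/p_n : n ∈ ℕ }. Then P is atomic with set of atoms A, 0 is not a limit point of P, but P is not an FF-monoid: the element 3 has infinitely many factorizations. -/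
lemma pair_eq_pair' {x y z w : ℚ} (h : ({x, y} : Multiset ℚ) = {z, w}) :
    (x = z ∧ y = w) ∨ (x = w ∧ y = z) := by
  rw [show ({z,w} : Multiset ℚ) = z ::ₘ {w} from rfl] at h
  rw [show ({x,y} : Multiset ℚ) = x ::ₘ {y} from rfl] at h
  rcases Multiset.cons_eq_cons.mp h with ⟨h1, h2⟩ | ⟨hne, cs, h1, h2⟩
  · left; exact ⟨h1, Multiset.singleton_inj.mp h2⟩
  · have hcs : cs = 0 := by
      have := congrArg Multiset.card h1
      simpa using this
    subst hcs
    right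
    exact ⟨by simpa using h2.symm, by simpa using h1⟩

theorem atomic_no_zero_limit_not_FF (p : ℕ → ℕ) (hinj : Function.Injective p)
    (hp : ∀ n, (p n).Prime) (hall : ∀ q : ℕ, q.Prime → ∃ n, p n = q)
    (P : AddSubmonoid ℚ)
    (A : Set ℚ)
    (hA : A = {x : ℚ | ∃ n : ℕ, x = ((p n : ℚ) + (p n / 2 : ℕ)) / (p n : ℚ) ∨
      x = (2 * (p n : ℚ) - (p n / 2 : ℕ)) / (p n : ℚ)})
    (hgen : AddSubmonoid.closure A = P) :
    IsAtomicMonoid P ∧ {a | IsAtomOf P a} = A ∧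
      (∃ ε : ℚ, 0 < ε ∧ ∀ x ∈ P, x ≠ 0 → ε ≤ x) ∧
      (Factorizations P 3).Infinite := by
  subst hgen
  -- basic facts
  have hppos : ∀ n, (0:ℚ) < p n := by
    intro n; exact_mod_cast (hp n).pos
  have hbound : ∀ a ∈ A, (4:ℚ)/3 ≤ a ∧ a ≤ 5/3 := by
    rw [hA]
    rintro a ⟨n, h | h⟩ <;>
    · have h2 := (hp n).two_le
      have c1 : (p n : ℚ) ≤ 3 * ((p n / 2 : ℕ) : ℚ) := by
        exact_mod_cast (by omega : p n ≤ 3 * (p n / 2))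
      have c2 : 3 * ((p n / 2 : ℕ) : ℚ) ≤ 2 * (p n : ℚ) := by
        exact_mod_cast (by omega : 3 * (p n / 2) ≤ 2 * p n)
      have hpos := hppos n
      subst h
      constructor
      · rw [le_div_iff₀ hpos]; linarith
      · rw [div_le_iff₀ hpos]; linarith
  -- nonzero elements are ≥ 4/3
  have hlow : ∀ x ∈ AddSubmonoid.closure A, x = 0 ∨ (4:ℚ)/3 ≤ x := by
    intro x hx
    obtain ⟨l, hl, rfl⟩ := AddSubmonoid.exists_list_of_mem_closure hx
    cases l with
    | nil => left; simp
    | cons a t =>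
      right
      have ha := (hbound a (hl a (by simp))).1
      have ht : 0 ≤ t.sum := List.sum_nonneg fun y hy =>
        le_trans (by norm_num) (hbound y (hl y (by simp [hy]))).1
      simp only [List.sum_cons]
      linarith
  -- every element of A is an atom
  have hAatom : ∀ a ∈ A, IsAtomOf (AddSubmonoid.closure A) a := by
    intro a ha
    refine ⟨AddSubmonoid.subset_closure ha, ?_, ?_⟩
    · have := (hbound a ha).1; intro h; rw [h] at this; norm_num at this
    · intro x hx y hy hsum
      by_contra hc
      push_neg at hc
      rcases hlow x hx with rfl | hx4
      · exact hc.1 rfl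
      rcases hlow y hy with rfl | hy4
      · exact hc.2 rfl
      have := (hbound a ha).2
      linarith
  -- atoms are exactly A
  have hatomA : {a | IsAtomOf (AddSubmonoid.closure A) a} = A := by
    ext a
    refine ⟨?_, hAatom a⟩
    rintro ⟨haP, ha0, hsplit⟩
    obtain ⟨l, hl, hs⟩ := AddSubmonoid.exists_list_of_mem_closure haP
    match l with
    | [] => exact absurd hs.symm ha0
    | [b] => simpa [← hs] using hl b (by simp)
    | b :: c :: t =>
      exfalso
      have hb : b ∈ AddSubmonoid.closure A :=
        AddSubmonoid.subset_closure (hl b (by simp))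
      have htl : (c :: t).sum ∈ AddSubmonoid.closure A := by
        apply AddSubmonoid.list_sum_mem
        intro y hy
        exact AddSubmonoid.subset_closure (hl y (by simp [hy]))
      rcases hsplit b hb _ htl (by simp [← hs]) with h | h
      · have := (hbound b (hl b (by simp))).1
        rw [h] at this; norm_num at this
      · have hc4 := (hbound c (hl c (by simp))).1
        have ht0 : 0 ≤ t.sum := List.sum_nonneg fun y hy =>
          le_trans (by norm_num) (hbound y (hl y (by simp [hy]))).1
        rw [List.sum_cons] at h
        linarith
  refine ⟨?_, hatomA, ⟨4/3, by norm_num, ?_⟩, ?_⟩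
  · -- atomic
    intro x hx
    obtain ⟨l, hl, rfl⟩ := AddSubmonoid.exists_list_of_mem_closure hx
    exact ⟨(l : Multiset ℚ), fun a ha => hAatom a (hl a (by simpa using ha)), by simp⟩
  · -- bounded below
    intro x hx hne
    rcases hlow x hx with rfl | h
    · exact absurd rfl hne
    · exact h
  · -- infinitely many factorizations of 3
    set f : ℕ → Multiset ℚ := fun n =>
      {((p n : ℚ) + (p n / 2 : ℕ)) / (p n : ℚ), (2 * (p n : ℚ) - (p n / 2 : ℕ)) / (p n : ℚ)}
    have hfA : ∀ n, f n ∈ Factorizations (AddSubmonoid.closure A) 3 := by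
      intro n
      constructor
      · intro a ha
        apply hAatom
        rw [hA]
        simp only [f, Multiset.insert_eq_cons, Multiset.mem_cons, Multiset.mem_singleton] at ha
        rcases ha with rfl | rfl
        exacts [⟨n, Or.inl rfl⟩, ⟨n, Or.inr rfl⟩]
      · have hpos := hppos n
        simp only [f, Multiset.insert_eq_cons, Multiset.sum_cons, Multiset.sum_singleton]
        field_simp
        ring
    have hS : ({n | p n = 2}ᶜ : Set ℕ).Infinite := by
      apply Set.Finite.infinite_compl
      have : {n | p n = 2} ⊆ p ⁻¹' {2} := fun n hn => hn
      exact Set.Finite.subset (Set.Finite.preimage (Set.injOn_of_injective hinj)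
        (Set.finite_singleton 2)) this
    have hkey : ∀ n ∈ ({n | p n = 2}ᶜ : Set ℕ), ∃ k : ℕ, p n = 2 * k + 1 ∧ p n / 2 = k ∧ 1 ≤ k := by
      intro n hn
      have hodd := (hp n).odd_of_ne_two hn
      have h2 := (hp n).two_le
      obtain ⟨k, hk⟩ := hodd
      exact ⟨k, by omega, by omega, by omega⟩
    have hfi : Set.InjOn f ({n | p n = 2}ᶜ : Set ℕ) := by
      intro m hm n hn hmn
      obtain ⟨km, hpm, hdm, hkm⟩ := hkey m hm
      obtain ⟨kn, hpn, hdn, hkn⟩ := hkey n hn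
      apply hinj
      have h := pair_eq_pair' hmn
      have hm0 : (0:ℚ) < (2 * km + 1 : ℕ) := by positivity
      have hn0 : (0:ℚ) < (2 * kn + 1 : ℕ) := by positivity
      rw [hdm, hdn, hpm, hpn] at h
      have hkmn : km = kn := by
        rcases h with ⟨h1, _⟩ | ⟨h1, _⟩
        · rw [div_eq_div_iff hm0.ne' hn0.ne'] at h1
          have : (km : ℚ) = kn := by push_cast at h1 ⊢; nlinarith
          exact_mod_cast this
        · rw [div_eq_div_iff hm0.ne' hn0.ne'] at h1
          exfalso
          have hkm' : (1:ℚ) ≤ km := by exact_mod_cast hkm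
          have hkn' : (1:ℚ) ≤ kn := by exact_mod_cast hkn
          push_cast at h1
          nlinarith
      rw [hpm, hpn, hkmn]
    have : (f '' ({n | p n = 2}ᶜ : Set ℕ)).Infinite := hS.image hfi
    apply this.mono
    rintro s ⟨n, _, rfl⟩
    exact hfA n
end
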